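/- arXiv:2601.21412 — 4 statements merged into one kernel-verified Lean document; each statement's English description precedes it below -/
import Mathlib

section
/- For any real number x, the principal value integral p.v. ∫_{-∞}^{∞} (1/s) · exp(-s²/2 + i·s·x) ds equals i·π·erf(x/√2), where erf is the Gauss error function erf(z) = (2/√π) ∫_0^z exp(-u²) du. -/
open Complex Real MeasureTheory Filter Topology

/-- The Gauss error function `erf z = (2/√π) ∫_0^z exp(-u²) du`. -/
noncomputable def erf (z : ℝ) : ℝ :=
  (2 / Real.sqrt Real.pi) * ∫ u in (0:ℝ)..z, Real.exp (-u ^ 2)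

lemma cos_fourier (t : ℝ) :
    ∫ s : ℝ, Real.exp (-s ^ 2 / 2) * Real.cos (s * t)
      = Real.sqrt (2 * Real.pi) * Real.exp (-t ^ 2 / 2) := by
  have h := fourierIntegral_gaussian (b := (1/2 : ℂ)) (by norm_num) (t : ℂ)
  have hint : Integrable (fun x : ℝ => cexp (Complex.I * (t:ℂ) * (x:ℂ)) * cexp (-(1/2 : ℂ) * (x:ℂ)^2)) := by
    have := integrable_cexp_quadratic (b := (1/2 : ℂ)) (by norm_num) (Complex.I * t) 0
    refine this.congr (Eventually.of_forall fun x => ?_)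
    simp only [← Complex.exp_add]; ring_nf
  have hre : ∫ s : ℝ, (cexp (Complex.I * (t:ℂ) * (s:ℂ)) * cexp (-(1/2:ℂ) * (s:ℂ)^2)).re
      = (∫ s : ℝ, cexp (Complex.I * (t:ℂ) * (s:ℂ)) * cexp (-(1/2:ℂ) * (s:ℂ)^2)).re := by
    simpa using integral_re hint
  rw [h] at hre
  have hL : ∀ s : ℝ, (cexp (Complex.I * (t:ℂ) * (s:ℂ)) * cexp (-(1/2:ℂ) * (s:ℂ)^2)).re
      = Real.exp (-s ^ 2 / 2) * Real.cos (s * t) := by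
    intro s
    have e1 : cexp (-(1/2:ℂ) * (s:ℂ)^2) = ((Real.exp (-s ^ 2 / 2) : ℝ) : ℂ) := by
      rw [Complex.ofReal_exp]; congr 1; push_cast; ring
    have e2 : Complex.I * (t:ℂ) * (s:ℂ) = ((s * t : ℝ) : ℂ) * Complex.I := by
      push_cast; ring
    rw [e1, e2]
    simp [Complex.mul_re, Complex.exp_re, Complex.exp_im, Complex.mul_im, Complex.div_re,
      Complex.div_im, Complex.normSq, mul_comm, ← Complex.ofReal_pow]
  rw [integral_congr_ae (Eventually.of_forall hL)] at hre
  rw [hre]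
  have hR : ((Real.pi : ℂ) / (1/2)) ^ (1/2 : ℂ) * cexp (-(t:ℂ) ^ 2 / (4 * (1/2)))
      = ((Real.sqrt (2 * Real.pi) * Real.exp (-t ^ 2 / 2) : ℝ) : ℂ) := by
    have h1 : ((Real.pi : ℂ) / (1/2)) = ((2 * Real.pi : ℝ) : ℂ) := by push_cast; ring
    have h2 : ((2 * Real.pi : ℝ) : ℂ) ^ (1/2 : ℂ) = ((Real.sqrt (2 * Real.pi) : ℝ) : ℂ) := by
      rw [show (1/2 : ℂ) = ((1/2 : ℝ) : ℂ) by norm_num,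
        ← Complex.ofReal_cpow (by positivity)]
      norm_cast
      exact (Real.sqrt_eq_rpow _).symm
    have h3 : cexp (-(t:ℂ) ^ 2 / (4 * (1/2))) = ((Real.exp (-t ^ 2 / 2) : ℝ) : ℂ) := by
      rw [Complex.ofReal_exp]; congr 1; push_cast; ring
    rw [h1, h2, h3, ← Complex.ofReal_mul]
  rw [hR, Complex.ofReal_re]

noncomputable def hfun (x : ℝ) (s : ℝ) : ℝ := Real.exp (-s^2/2) * (Real.sin (s*x) / s)

lemma exp_sq_integrable : Integrable (fun s : ℝ => Real.exp (-s^2/2)) := by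
  have h2 : (fun s : ℝ => Real.exp (-s^2/2)) = fun s => Real.exp (-(1/2)*s^2) := by
    ext s; ring_nf
  rw [h2]; exact integrable_exp_neg_mul_sq (by norm_num)

lemma sin_div_le (x s : ℝ) : |Real.sin (s*x) / s| ≤ |x| := by
  rcases eq_or_ne s 0 with rfl | hs
  · simp
  · rw [abs_div, div_le_iff₀ (abs_pos.mpr hs)]
    calc |Real.sin (s*x)| ≤ |s*x| := Real.abs_sin_le_abs
    _ = |x| * |s| := by rw [abs_mul]; ring

lemma hfun_integrable (x : ℝ) : Integrable (hfun x) := by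
  refine (exp_sq_integrable.const_mul |x|).mono' ?_ (Eventually.of_forall fun s => ?_)
  · apply Measurable.aestronglyMeasurable; unfold hfun; measurability
  · rw [Real.norm_eq_abs, hfun, abs_mul, Real.abs_exp, mul_comm]
    exact mul_le_mul_of_nonneg_right (sin_div_le x s) (Real.exp_pos _).le

lemma erf_neg (z : ℝ) : erf (-z) = - erf z := by
  unfold erf
  suffices h : ∫ u in (0:ℝ)..(-z), Real.exp (-u^2) = -∫ u in (0:ℝ)..z, Real.exp (-u^2) by
    rw [h]; ring
  have h1 := intervalIntegral.integral_comp_neg (a := (0:ℝ)) (b := z) (fun u => Real.exp (-u^2))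
  simp only [neg_neg, neg_sq, neg_zero] at h1
  rw [intervalIntegral.integral_symm]
  rw [← h1]

lemma key_nonneg {x : ℝ} (hx : 0 ≤ x) :
    ∫ s : ℝ, hfun x s = Real.pi * erf (x / Real.sqrt 2) := by
  have hs2 : (Real.sqrt 2) ≠ 0 := by positivity
  have hae : ∀ᵐ s : ℝ, s ≠ 0 := by
    refine (ae_iff.mpr ?_)
    simp only [not_not, Set.setOf_eq_eq_singleton]
    exact measure_singleton 0
  have step1 : ∫ s : ℝ, hfun x s
      = ∫ s : ℝ, ∫ t in Set.Ioc 0 x, Real.exp (-s^2/2) * Real.cos (s*t) := by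
    refine integral_congr_ae (hae.mono fun s hs => ?_)
    show hfun x s = ∫ t in Set.Ioc 0 x, Real.exp (-s^2/2) * Real.cos (s*t)
    rw [MeasureTheory.integral_const_mul, ← intervalIntegral.integral_of_le hx]
    rw [intervalIntegral.integral_comp_mul_left (fun u => Real.cos u) hs]
    simp [integral_cos, smul_eq_mul, hfun]
    rw [div_eq_inv_mul]
  have hprod : Integrable (Function.uncurry fun s t => Real.exp (-s^2/2) * Real.cos (s*t))
      (volume.prod (volume.restrict (Set.Ioc 0 x))) := by
    haveI : IsFiniteMeasure (volume.restrict (Set.Ioc (0:ℝ) x)) :=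
      ⟨by rw [Measure.restrict_apply_univ, Real.volume_Ioc]; exact ENNReal.ofReal_lt_top⟩
    have hmaj : Integrable (fun z : ℝ × ℝ => Real.exp (-z.1^2/2) * 1)
        (volume.prod (volume.restrict (Set.Ioc 0 x))) :=
      exp_sq_integrable.mul_prod (integrable_const 1)
    refine hmaj.mono' ?_ (Eventually.of_forall fun z => ?_)
    · exact (Continuous.aestronglyMeasurable (by fun_prop))
    · rw [Function.uncurry, Real.norm_eq_abs, abs_mul, Real.abs_exp]
      exact mul_le_mul_of_nonneg_left (abs_cos_le_one _) (Real.exp_pos _).le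
  have step2 := integral_integral_swap hprod
  have step3 : ∫ t in Set.Ioc 0 x, ∫ s : ℝ, Real.exp (-s^2/2) * Real.cos (s*t)
      = ∫ t in Set.Ioc 0 x, Real.sqrt (2*Real.pi) * Real.exp (-t^2/2) := by
    refine setIntegral_congr_fun measurableSet_Ioc fun t _ => ?_
    have := cos_fourier t
    simpa using this
  have step4 : ∫ t in Set.Ioc 0 x, Real.sqrt (2*Real.pi) * Real.exp (-t^2/2)
      = Real.pi * erf (x / Real.sqrt 2) := by
    rw [← intervalIntegral.integral_of_le hx, intervalIntegral.integral_const_mul]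
    have hsub : ∫ t in (0:ℝ)..x, Real.exp (-t^2/2)
        = Real.sqrt 2 * ∫ u in (0:ℝ)..(x / Real.sqrt 2), Real.exp (-u^2) := by
      have hptw : ∀ t, Real.exp (-t^2/2) = (fun u : ℝ => Real.exp (-u^2)) (t / Real.sqrt 2) := by
        intro t; simp only
        congr 1
        rw [div_pow, Real.sq_sqrt (by norm_num : (0:ℝ) ≤ 2)]
        ring
      calc ∫ t in (0:ℝ)..x, Real.exp (-t^2/2)
          = ∫ t in (0:ℝ)..x, (fun u : ℝ => Real.exp (-u^2)) (t / Real.sqrt 2) := by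
            exact intervalIntegral.integral_congr fun t _ => hptw t
        _ = Real.sqrt 2 • ∫ u in ((0:ℝ)/Real.sqrt 2)..(x / Real.sqrt 2), Real.exp (-u^2) := by
            exact intervalIntegral.integral_comp_div (fun u => Real.exp (-u^2)) hs2
        _ = Real.sqrt 2 * ∫ u in (0:ℝ)..(x / Real.sqrt 2), Real.exp (-u^2) := by
            rw [zero_div, smul_eq_mul]
    rw [hsub]
    unfold erf
    have hconst : Real.sqrt (2*Real.pi) * Real.sqrt 2 = Real.pi * (2 / Real.sqrt Real.pi) := by
      rw [Real.sqrt_mul (by norm_num : (0:ℝ) ≤ 2)]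
      rw [mul_comm (Real.sqrt 2), mul_assoc, Real.mul_self_sqrt (by norm_num : (0:ℝ) ≤ 2)]
      rw [mul_comm Real.pi, mul_comm_div, Real.div_sqrt]
      ring
    rw [← mul_assoc, hconst]
    ring
  rw [step1, step2, step3, step4]

lemma key_eq (x : ℝ) : ∫ s : ℝ, hfun x s = Real.pi * erf (x / Real.sqrt 2) := by
  rcases le_or_gt 0 x with hx | hx
  · exact key_nonneg hx
  · have h1 : ∀ s, hfun x s = - hfun (-x) s := by
      intro s; unfold hfun
      rw [show s * x = -(s * (-x)) by ring, Real.sin_neg]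
      ring
    rw [integral_congr_ae (Eventually.of_forall h1), integral_neg, key_nonneg (by linarith),
      show x / Real.sqrt 2 = -(-x / Real.sqrt 2) by ring]
    rw [erf_neg]; ring

lemma Smeas (ε : ℝ) : MeasurableSet {s : ℝ | ε ≤ |s|} :=
  (isClosed_le continuous_const _root_.continuous_abs).measurableSet

lemma odd_vanish (f : ℝ → ℝ) (hodd : ∀ s, f (-s) = - f s) (ε : ℝ) :
    ∫ s in {s : ℝ | ε ≤ |s|}, f s = 0 := by
  rw [← integral_indicator (Smeas ε)]
  set G := Set.indicator {s : ℝ | ε ≤ |s|} f with hG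
  have hGodd : ∀ s, G (-s) = - G s := by
    intro s
    by_cases hs : s ∈ {s : ℝ | ε ≤ |s|}
    · rw [hG, Set.indicator_of_mem (by simpa [abs_neg] using hs), Set.indicator_of_mem hs]
      exact hodd s
    · rw [hG, Set.indicator_of_notMem (by simpa [abs_neg] using hs),
        Set.indicator_of_notMem hs, neg_zero]
  have h1 : ∫ s : ℝ, G (-s) = ∫ s : ℝ, G s := integral_neg_eq_self G volume
  have h2 : ∫ s : ℝ, G (-s) = - ∫ s : ℝ, G s := by
    rw [integral_congr_ae (Eventually.of_forall hGodd), integral_neg]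
  have := h1.symm.trans h2
  linarith

/-- `p.v. ∫ (1/s) exp(-s²/2 + i s x) ds = i π erf(x/√2)`, where the principal value is the
limit as `ε → 0⁺` of the integral over `{s : |s| ≥ ε}`. -/
theorem principal_value_gaussian (x : ℝ) :
    Tendsto (fun ε : ℝ =>
        ∫ s in {s : ℝ | ε ≤ |s|},
          (1 / (s : ℂ)) * Complex.exp (-(s : ℂ) ^ 2 / 2 + Complex.I * (s : ℂ) * (x : ℂ)))
      (𝓝[>] 0)
      (𝓝 (Complex.I * (Real.pi : ℂ) * (erf (x / Real.sqrt 2) : ℂ))) := by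
  set A := Real.pi * erf (x / Real.sqrt 2) with hA
  set c : ℝ → ℝ := fun ε => ∫ s in Set.Ioo (-ε) ε, hfun x s with hc
  set g : ℝ → ℝ := fun s => Real.exp (-s^2/2) * Real.cos (s*x) / s with hg
  have hcompl : ∀ ε : ℝ, {s : ℝ | ε ≤ |s|}ᶜ = Set.Ioo (-ε) ε := by
    intro ε; ext s
    simp [not_le, abs_lt]
  -- pointwise decomposition
  have hdecomp : ∀ s : ℝ, (1 / (s:ℂ)) * Complex.exp (-(s:ℂ)^2/2 + Complex.I * s * x)
      = ((g s : ℝ) : ℂ) + Complex.I * ((hfun x s : ℝ) : ℂ) := by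
    intro s
    rcases eq_or_ne s 0 with rfl | hs
    · simp [hg, hfun]
    · have hsC : (s:ℂ) ≠ 0 := by exact_mod_cast hs
      rw [Complex.exp_add]
      have e1 : Complex.exp (-(s:ℂ)^2/2) = ((Real.exp (-s^2/2) : ℝ) : ℂ) := by
        rw [Complex.ofReal_exp]; congr 1; push_cast; ring
      have e2 : Complex.I * (s:ℂ) * (x:ℂ) = ((s*x : ℝ):ℂ) * Complex.I := by push_cast; ring
      rw [e1, e2, Complex.exp_mul_I, ← Complex.ofReal_cos, ← Complex.ofReal_sin]
      rw [hg, hfun]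
      simp only
      push_cast
      field_simp
  -- eventual equality
  have heq : ∀ ε ∈ Set.Ioi (0:ℝ),
      (∫ s in {s : ℝ | ε ≤ |s|},
        (1 / (s : ℂ)) * Complex.exp (-(s : ℂ) ^ 2 / 2 + Complex.I * (s : ℂ) * (x : ℂ)))
      = Complex.I * ((A - c ε : ℝ) : ℂ) := by
    intro ε hε
    rw [Set.mem_Ioi] at hε
    have hgint : IntegrableOn g {s : ℝ | ε ≤ |s|} := by
      refine ((exp_sq_integrable.const_mul (1/ε)).integrableOn).mono' ?_ ?_
      · exact (Measurable.aestronglyMeasurable (by unfold g; measurability))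
      · rw [ae_restrict_iff' (Smeas ε)]
        refine Eventually.of_forall fun s hs => ?_
        have hs' : ε ≤ |s| := hs
        have hs0 : (0:ℝ) < |s| := lt_of_lt_of_le hε hs'
        rw [hg, Real.norm_eq_abs, abs_div, abs_mul, Real.abs_exp]
        rw [div_le_iff₀ hs0] at *
        calc Real.exp (-s^2/2) * |Real.cos (s*x)|
            ≤ Real.exp (-s^2/2) * 1 := mul_le_mul_of_nonneg_left (abs_cos_le_one _) (Real.exp_pos _).le
          _ = Real.exp (-s^2/2) := mul_one _
          _ ≤ 1/ε * Real.exp (-s^2/2) * |s| := by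
              rw [mul_comm (1/ε), mul_assoc]
              nth_rewrite 1 [← mul_one (Real.exp (-s^2/2))]
              refine mul_le_mul_of_nonneg_left ?_ (Real.exp_pos _).le
              rw [one_div, ← div_eq_inv_mul, le_div_iff₀ hε]
              linarith
    have hhint : IntegrableOn (hfun x) {s : ℝ | ε ≤ |s|} := (hfun_integrable x).integrableOn
    rw [integral_congr_ae (Eventually.of_forall fun s => hdecomp s)]
    rw [integral_add (f := fun s : ℝ => ((g s : ℝ) : ℂ))
        (g := fun s : ℝ => Complex.I * ((hfun x s : ℝ) : ℂ))
        hgint.ofReal ((hhint.ofReal).const_mul Complex.I),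
      MeasureTheory.integral_const_mul,
      show (∫ s in {s : ℝ | ε ≤ |s|}, ((g s : ℝ) : ℂ)) = ((∫ s in {s : ℝ | ε ≤ |s|}, g s : ℝ) : ℂ)
        from integral_ofReal,
      show (∫ s in {s : ℝ | ε ≤ |s|}, ((hfun x s : ℝ) : ℂ))
          = ((∫ s in {s : ℝ | ε ≤ |s|}, hfun x s : ℝ) : ℂ) from integral_ofReal]
    have hodd : ∀ s : ℝ, g (-s) = - g s := by
      intro s; rw [hg]; simp only
      rw [show -s * x = -(s*x) by ring, Real.cos_neg, div_neg, neg_div, neg_sq, neg_div 2 (s^2)]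
    rw [odd_vanish g hodd ε]
    have hsplit : (∫ s in {s : ℝ | ε ≤ |s|}, hfun x s) = A - c ε := by
      have h3 := integral_add_compl (Smeas ε) (hfun_integrable x)
      rw [hcompl ε, key_eq x, ← hA] at h3
      rw [← h3, hc]; ring_nf
    rw [hsplit]
    simp [smul_eq_mul]
  -- limit of c
  have hcz : Tendsto c (𝓝[>] 0) (𝓝 0) := by
    rw [tendsto_zero_iff_norm_tendsto_zero]
    refine squeeze_zero' (g := fun ε => |x| * (2*ε)) (Eventually.of_forall fun ε => norm_nonneg _)
      (eventually_mem_nhdsWithin.mono fun ε hε => ?_) ?_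
    · rw [Set.mem_Ioi] at hε
      have hb := norm_setIntegral_le_of_norm_le_const (μ := volume) (s := Set.Ioo (-ε) ε)
        (f := hfun x) measure_Ioo_lt_top (C := |x|) ?_
      · rw [measureReal_def, Real.volume_Ioo] at hb
        calc ‖c ε‖ ≤ |x| * (ENNReal.ofReal (ε - -ε)).toReal := hb
          _ = |x| * (2*ε) := by rw [ENNReal.toReal_ofReal (by linarith)]; ring_nf
      · intro s _
        rw [hfun, Real.norm_eq_abs, abs_mul, Real.abs_exp]
        calc Real.exp (-s^2/2) * |Real.sin (s*x)/s| ≤ 1 * |x| := by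
              refine mul_le_mul (Real.exp_le_one_iff.mpr (by nlinarith [sq_nonneg s])) (sin_div_le x s)
                (abs_nonneg _) one_pos.le
          _ = |x| := one_mul _
    · have hcont : Continuous (fun ε : ℝ => |x| * (2*ε)) := by fun_prop
      have h6 := hcont.tendsto (0:ℝ)
      simp only [mul_zero] at h6
      exact h6.mono_left nhdsWithin_le_nhds
  -- conclude
  have hfinal : Tendsto (fun ε => Complex.I * ((A - c ε : ℝ) : ℂ)) (𝓝[>] 0)
      (𝓝 (Complex.I * (A : ℂ))) := by
    refine Tendsto.const_mul _ ?_
    have h5 : Tendsto (fun ε => A - c ε) (𝓝[>] 0) (𝓝 A) := by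
      simpa using tendsto_const_nhds.sub hcz
    exact (Complex.continuous_ofReal.tendsto A).comp h5
  have htarget : Complex.I * (Real.pi : ℂ) * ((erf (x / Real.sqrt 2) : ℝ) : ℂ)
      = Complex.I * (A : ℂ) := by rw [hA]; push_cast; ring
  rw [htarget]
  exact hfinal.congr' (eventually_mem_nhdsWithin.mono fun ε hε => (heq ε hε).symm)
end

section
/- The function Φ(v₂, v₃) := 1/(v₂v₃) + v₂ + v₃ - 3 satisfies Re(Φ(v₂, v₃)) ≤ 0 for all complex numbers v₂, v₃ with |v₂| = |v₃| = 1, with equality if and only if v₂ = v₃ = 1. -/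
open Complex

/-- The phase function `Φ(v₂,v₃) = 1/(v₂v₃) + v₂ + v₃ - 3` has nonpositive real part on the
torus `|v₂| = |v₃| = 1`, with equality exactly at `v₂ = v₃ = 1`. -/
theorem phase_re_nonpos_on_torus (v₂ v₃ : ℂ)
    (h₂ : ‖v₂‖ = 1) (h₃ : ‖v₃‖ = 1) :
    (1 / (v₂ * v₃) + v₂ + v₃ - 3).re ≤ 0 ∧
      ((1 / (v₂ * v₃) + v₂ + v₃ - 3).re = 0 ↔ v₂ = 1 ∧ v₃ = 1) := by
  have n₂ : Complex.normSq v₂ = 1 := by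
    rw [← Complex.sq_norm, h₂, one_pow]
  have n₃ : Complex.normSq v₃ = 1 := by
    rw [← Complex.sq_norm, h₃, one_pow]
  have hn : Complex.normSq (v₂ * v₃) = 1 := by
    rw [Complex.normSq_mul, n₂, n₃, one_mul]
  have hre : (1 / (v₂ * v₃) + v₂ + v₃ - 3).re
      = v₂.re * v₃.re - v₂.im * v₃.im + v₂.re + v₃.re - 3 := by
    rw [Complex.sub_re, Complex.add_re, Complex.add_re, one_div, Complex.inv_re, hn,
      Complex.mul_re]
    norm_num
  have e₂ : v₂.re ^ 2 + v₂.im ^ 2 = 1 := by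
    have := n₂; rw [Complex.normSq_apply] at this; nlinarith [this]
  have e₃ : v₃.re ^ 2 + v₃.im ^ 2 = 1 := by
    have := n₃; rw [Complex.normSq_apply] at this; nlinarith [this]
  have key : v₂.re * v₃.re - v₂.im * v₃.im + v₂.re + v₃.re - 3 ≤ 0 := by
    nlinarith [sq_nonneg (v₂.re * v₃.im + v₂.im * v₃.re), sq_nonneg (v₂.im - v₃.im),
      sq_nonneg (v₂.re - v₃.re), sq_nonneg (v₂.re - 1), sq_nonneg (v₃.re - 1),
      sq_nonneg v₂.im, sq_nonneg v₃.im]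
  constructor
  · rw [hre]; exact key
  · constructor
    · intro h
      rw [hre] at h
      have hr2 : v₂.re = 1 := by
        nlinarith [sq_nonneg (v₂.re * v₃.im + v₂.im * v₃.re), sq_nonneg (v₂.re - 1),
          sq_nonneg (v₃.re - 1), sq_nonneg (v₂.im - v₃.im), sq_nonneg (v₂.im + v₃.im)]
      have hi2 : v₂.im = 0 := by
        have h0 : v₂.im ^ 2 = 0 := by rw [hr2] at e₂; nlinarith
        exact pow_eq_zero_iff two_ne_zero |>.mp h0
      have hr3 : v₃.re = 1 := by rw [hr2, hi2] at h; linarith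
      have hi3 : v₃.im = 0 := by
        have h0 : v₃.im ^ 2 = 0 := by rw [hr3] at e₃; nlinarith
        exact pow_eq_zero_iff two_ne_zero |>.mp h0
      exact ⟨Complex.ext hr2 hi2, Complex.ext hr3 hi3⟩
    · rintro ⟨rfl, rfl⟩
      norm_num
end

section
/- Let η : ℤ → ℤ be a function such that min_{x ≤ b} η(x) exists for every b ∈ ℤ, and define ν̃(b) := min_{x ≤ b} η(x) and ξ̃(a) := 1 if η(x) > η(a) for all x < a, and ξ̃(a) := 0 otherwise. Fix a ∈ ℤ with η(a) > η(a+1) and let η' be obtained from η by swapping the values at a and a+1 (η'(a) = η(a+1), η'(a+1) = η(a), η' = η elsewhere). Then with ν̃', ξ̃' defined analogously from η': (i) ν̃'(b) = ν̃(b) for all b ≠ a, and ν̃'(a) = ν̃(a+1); (ii) it is impossible that ξ̃(a) = 1 and ξ̃(a+1) = 0; (iii) if ξ̃(a+1) = 1 then ξ̃'(a) = 1 and ξ̃'(a+1) = 0, while if ξ̃(a) = ξ̃(a+1) = 0 then ξ̃' = ξ̃. -/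
/-!
Write the swapped configuration as `η ∘ swap a (a+1)`. This permutation maps every half-line
`(-∞, b]` with `b ≠ a` and every `(-∞, c)` with `c ≠ a + 1` onto itself, so prefix minima and
records there are unchanged. On `(-∞, a]` it replaces `a` by `a + 1`, which leaves the prefix
minimum of `(-∞, a+1]` intact because `η (a+1) < η a`. For the same reason a record at `a`
forces one at `a + 1`, a record at `a + 1` moves to `a`, and `a + 1` is never a record after
the swap.
-/

open Set Equiv

lemma eq_ite_of_eq_one_iff {n : ℕ} {p : Prop} [Decidable p]
    (h : (n = 1 ↔ p) ∧ (n = 0 ∨ n = 1)) :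
    n = if p then 1 else 0 := by
  obtain ⟨h₁, h₀ | rfl⟩ := h
  · rw [if_neg fun hp => absurd (h₁.2 hp) (by omega), h₀]
  · rw [if_pos (h₁.1 rfl)]

lemma eq_comp_swap_of_apply {β γ : Type*} [DecidableEq β] {f g : β → γ} {a b : β}
    (ha : g a = f b) (hb : g b = f a) (hne : ∀ y, y ≠ a → y ≠ b → g y = f y) :
    g = f ∘ swap a b := by
  funext y
  rw [Function.comp_apply, swap_apply_def]
  split_ifs with h₁ h₂
  · rw [h₁, ha]
  · rw [h₂, hb]
  · exact hne y h₁ h₂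

section SwapSucc

variable {a x : ℤ}

lemma swap_succ_le_iff {b : ℤ} (hb : b ≠ a) : swap a (a + 1) x ≤ b ↔ x ≤ b := by
  rw [swap_apply_def]; split_ifs <;> omega

lemma swap_succ_le_self_iff : swap a (a + 1) x ≤ a ↔ x ≤ a + 1 ∧ x ≠ a := by
  rw [swap_apply_def]; split_ifs <;> omega

lemma swap_succ_lt_iff {c : ℤ} (hc : c ≠ a + 1) : swap a (a + 1) x < c ↔ x < c := by
  rw [swap_apply_def]; split_ifs <;> omega

lemma image_swap_succ_Iic {b : ℤ} (hb : b ≠ a) : swap a (a + 1) '' Iic b = Iic b := by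
  ext x
  simp [image_eq_preimage_symm, swap_succ_le_iff hb]

lemma image_swap_succ_Iic_self : swap a (a + 1) '' Iic a = Iic (a + 1) \ {a} := by
  ext x
  simp [image_eq_preimage_symm, swap_succ_le_self_iff]

lemma image_swap_succ_Iio {c : ℤ} (hc : c ≠ a + 1) : swap a (a + 1) '' Iio c = Iio c := by
  ext x
  simp [image_eq_preimage_symm, swap_succ_lt_iff hc]

end SwapSucc

section PrefixMin

variable {α : Type*} [LinearOrder α] {η : ℤ → α} {a : ℤ} {m m' : α}

lemma isLeast_image_Iic_iff {b : ℤ} :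
    IsLeast (η '' Iic b) m ↔ (∃ x ≤ b, η x = m) ∧ ∀ x ≤ b, m ≤ η x := by
  simp [IsLeast, lowerBounds]

lemma IsLeast.image_diff_singleton {β : Type*} {f : β → α} {s : Set β} {x y : β}
    (hm : IsLeast (f '' s) m) (hy : y ∈ s) (hyx : f y < f x) : IsLeast (f '' (s \ {x})) m := by
  obtain ⟨⟨z, hz, rfl⟩, hlow⟩ := hm
  refine ⟨⟨z, ⟨hz, fun hzx => ?_⟩, rfl⟩,
    lowerBounds_mono_set (image_mono sdiff_subset) hlow⟩
  subst hzx
  exact (hlow (mem_image_of_mem f hy)).not_gt hyx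

lemma IsLeast.swap_succ_of_ne {b : ℤ} (hm : IsLeast (η '' Iic b) m)
    (hm' : IsLeast ((η ∘ swap a (a + 1)) '' Iic b) m') (hb : b ≠ a) : m' = m := by
  rw [image_comp, image_swap_succ_Iic hb] at hm'
  exact hm'.unique hm

lemma IsLeast.swap_succ_self (hm : IsLeast (η '' Iic (a + 1)) m)
    (hm' : IsLeast ((η ∘ swap a (a + 1)) '' Iic a) m') (hswap : η (a + 1) < η a) : m' = m := by
  rw [image_comp, image_swap_succ_Iic_self] at hm'
  exact hm'.unique (hm.image_diff_singleton self_mem_Iic hswap)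

end PrefixMin

section Record

variable {α : Type*} [LinearOrder α] {η : ℤ → α} {a c : ℤ}

def IsRecord (η : ℤ → α) (c : ℤ) : Prop := ∀ x < c, η c < η x

lemma isRecord_iff_forall_mem_image : IsRecord η c ↔ ∀ y ∈ η '' Iio c, η c < y := by
  simp [IsRecord]

lemma isRecord_succ_iff (hswap : η (a + 1) < η a) :
    IsRecord η (a + 1) ↔ ∀ x < a, η (a + 1) < η x := by
  refine ⟨fun h x hx => h x (hx.trans (lt_add_one a)), fun h x hx => ?_⟩
  rcases (Int.lt_add_one_iff.mp hx).lt_or_eq with hxa | rfl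
  · exact h x hxa
  · exact hswap

lemma IsRecord.succ (h : IsRecord η a) (hswap : η (a + 1) < η a) : IsRecord η (a + 1) :=
  (isRecord_succ_iff hswap).2 fun x hx => hswap.trans (h x hx)

lemma not_isRecord_swap_succ (hswap : η (a + 1) < η a) :
    ¬ IsRecord (η ∘ swap a (a + 1)) (a + 1) := fun h => by
  have h_left := h a (lt_add_one a)
  simp only [Function.comp_apply, swap_apply_left, swap_apply_right] at h_left
  exact lt_asymm h_left hswap

lemma isRecord_swap_succ_iff (hswap : η (a + 1) < η a) :
    IsRecord (η ∘ swap a (a + 1)) a ↔ IsRecord η (a + 1) := by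
  rw [isRecord_iff_forall_mem_image, image_comp, image_swap_succ_Iio (by omega),
    Function.comp_apply, swap_apply_left, forall_mem_image, isRecord_succ_iff hswap]
  exact Iff.rfl

lemma isRecord_swap_succ_iff_of_ne (h₁ : c ≠ a) (h₂ : c ≠ a + 1) :
    IsRecord (η ∘ swap a (a + 1)) c ↔ IsRecord η c := by
  rw [isRecord_iff_forall_mem_image, isRecord_iff_forall_mem_image, image_comp,
    image_swap_succ_Iio h₂, Function.comp_apply, swap_apply_of_ne_of_ne h₁ h₂]

end Record

/-- TASEP swap at bond `(a, a+1)` induces the voter/coalescence update.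
`η` is the TASEP configuration, `ν` the voter projection (min of `η` weakly to the left),
`ξ` the coalescence projection (`ξ a = 1` iff `η a` is smaller than all values strictly left).
`η'` is `η` with the values at `a` and `a+1` swapped (allowed since `η a > η (a+1)`), and
`ν', ξ'` are its projections. -/
theorem tasep_voter_coalescence_update
    (η η' : ℤ → ℤ) (ν ν' : ℤ → ℤ) (ξ ξ' : ℤ → ℕ) (a : ℤ)
    (hswap : η a > η (a + 1))
    (hη' : η' a = η (a + 1) ∧ η' (a + 1) = η a ∧ ∀ y : ℤ, y ≠ a → y ≠ a + 1 → η' y = η y)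
    (hν : ∀ b : ℤ, (∃ x ≤ b, η x = ν b) ∧ ∀ x ≤ b, ν b ≤ η x)
    (hν' : ∀ b : ℤ, (∃ x ≤ b, η' x = ν' b) ∧ ∀ x ≤ b, ν' b ≤ η' x)
    (hξ : ∀ c : ℤ, (ξ c = 1 ↔ ∀ x < c, η c < η x) ∧ (ξ c = 0 ∨ ξ c = 1))
    (hξ' : ∀ c : ℤ, (ξ' c = 1 ↔ ∀ x < c, η' c < η' x) ∧ (ξ' c = 0 ∨ ξ' c = 1)) :
    -- (i) voter update
    ((∀ b : ℤ, b ≠ a → ν' b = ν b) ∧ ν' a = ν (a + 1)) ∧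
    -- (ii) the case ξ a = 1, ξ (a+1) = 0 is impossible
    ¬ (ξ a = 1 ∧ ξ (a + 1) = 0) ∧
    -- (iii) coalescence update
    ((ξ (a + 1) = 1 → ξ' a = 1 ∧ ξ' (a + 1) = 0) ∧
      (ξ a = 0 ∧ ξ (a + 1) = 0 → ∀ c : ℤ, ξ' c = ξ c)) := by
  classical
  obtain rfl : η' = η ∘ swap a (a + 1) := eq_comp_swap_of_apply hη'.1 hη'.2.1 hη'.2.2
  obtain rfl : ξ = fun c => if IsRecord η c then 1 else 0 :=
    funext fun c => eq_ite_of_eq_one_iff (hξ c)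
  obtain rfl : ξ' = fun c => if IsRecord (η ∘ swap a (a + 1)) c then 1 else 0 :=
    funext fun c => eq_ite_of_eq_one_iff (hξ' c)
  simp only [← isLeast_image_Iic_iff] at hν hν'
  refine ⟨⟨fun b hb => (hν b).swap_succ_of_ne (hν' b) hb,
    (hν (a + 1)).swap_succ_self (hν' a) hswap⟩, ?_, ?_, ?_⟩
  all_goals simp only [ite_eq_left_iff, ite_eq_right_iff, one_ne_zero, zero_ne_one, imp_false,
    not_not]
  · exact fun ⟨h₀, h₁⟩ => h₁ (h₀.succ hswap)
  · exact fun h => ⟨(isRecord_swap_succ_iff hswap).2 h, not_isRecord_swap_succ hswap⟩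
  · rintro ⟨h₀, h₁⟩ c
    refine if_congr ?_ rfl rfl
    rcases eq_or_ne c a with rfl | hca
    · exact iff_of_false (mt (isRecord_swap_succ_iff hswap).1 h₁) h₀
    rcases eq_or_ne c (a + 1) with rfl | hca'
    · exact iff_of_false (not_isRecord_swap_succ hswap) h₁
    · exact isRecord_swap_succ_iff_of_ne hca hca'
end

section
/- Let f : ℝ → ℂ be a Schwartz function (or continuous, integrable, and Hölder at 0). Then lim_{ε → 0⁺} ∫_{-∞}^{∞} f(x)/(x + iε) dx = -iπ·f(0) + p.v. ∫_{-∞}^{∞} f(x)/x dx, and lim_{ε → 0⁺} ∫_{-∞}^{∞} f(x)/(x - iε) dx = iπ·f(0) + p.v. ∫_{-∞}^{∞} f(x)/x dx. -/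
open Complex MeasureTheory Filter Topology Set

set_option maxHeartbeats 1000000 in
/-- Sokhotski–Plemelj theorem on the real line for Schwartz functions:
`lim_{ε→0⁺} ∫ f(x)/(x ± iε) dx = ∓iπ f(0) + p.v. ∫ f(x)/x dx`, where the principal value is
the limit as `δ → 0⁺` of the integral over `{|x| ≥ δ}`. -/
theorem sokhotski_plemelj (f : SchwartzMap ℝ ℂ) :
    ∃ pv : ℂ,
      Tendsto (fun δ : ℝ => ∫ x in {x : ℝ | δ ≤ |x|}, f x / (x : ℂ)) (𝓝[>] 0) (𝓝 pv) ∧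
      Tendsto (fun ε : ℝ => ∫ x : ℝ, f x / ((x : ℂ) + ε * Complex.I)) (𝓝[>] 0)
        (𝓝 (-Complex.I * Real.pi * f 0 + pv)) ∧
      Tendsto (fun ε : ℝ => ∫ x : ℝ, f x / ((x : ℂ) - ε * Complex.I)) (𝓝[>] 0)
        (𝓝 (Complex.I * Real.pi * f 0 + pv)) := by
  -- the odd part
  set h : ℝ → ℂ := fun x => f x - f (-x) with hh_def
  have hfi : Integrable (fun x : ℝ => f x) := f.integrable
  have hfin : Integrable (fun x : ℝ => f (-x)) := f.integrable.comp_neg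
  have hhmeas : Measurable (fun x : ℝ => h x / (x : ℂ)) :=
    ((f.continuous.measurable.sub (f.continuous.comp continuous_neg).measurable)).div
      Complex.measurable_ofReal
  -- Lipschitz bound
  obtain ⟨C, hCpos, hC⟩ := (SchwartzMap.derivCLM ℝ ℂ f).decay 0 0
  have hC' : ∀ x : ℝ, ‖deriv (⇑f) x‖ ≤ C := by
    intro x
    simpa [norm_iteratedFDeriv_zero, SchwartzMap.derivCLM_apply] using hC x
  have hlip : LipschitzWith C.toNNReal (⇑f) := by
    apply lipschitzWith_of_nnnorm_deriv_le f.differentiable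
    intro x
    simpa [← NNReal.coe_le_coe, coe_nnnorm, Real.coe_toNNReal', le_max_iff] using
      Or.inl (hC' x)
  have hhle : ∀ x : ℝ, ‖h x‖ ≤ 2 * C * |x| := by
    intro x
    have := hlip.dist_le_mul x (-x)
    simp only [dist_eq_norm, sub_neg_eq_add] at this
    have hx : ‖x - -x‖ = 2 * |x| := by
      rw [sub_neg_eq_add, Real.norm_eq_abs]
      rw [show x + x = 2 * x by ring, abs_mul]
      norm_num
    calc ‖h x‖ = dist (f x) (f (-x)) := by rw [dist_eq_norm]
      _ ≤ C.toNNReal * dist x (-x) := hlip.dist_le_mul x (-x)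
      _ ≤ C * (2 * |x|) := by
          rw [dist_eq_norm, hx, Real.coe_toNNReal C hCpos.le]
      _ = 2 * C * |x| := by ring
  -- bound for h x / x
  have hhx : ∀ x : ℝ, x ≠ 0 → ‖h x / (x : ℂ)‖ = ‖h x‖ / |x| := by
    intro x hx
    rw [norm_div, Complex.norm_real, Real.norm_eq_abs]
  have hhx2 : ∀ x : ℝ, ‖h x / (x : ℂ)‖ ≤ 2 * C := by
    intro x
    rcases eq_or_ne x 0 with rfl | hx
    · simp [hh_def]; positivity
    · rw [hhx x hx, div_le_iff₀ (abs_pos.mpr hx)]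
      calc ‖h x‖ ≤ 2 * C * |x| := hhle x
        _ = 2 * C * |x| := rfl
  -- integrability of h x / x
  have hint : Integrable (fun x : ℝ => h x / (x : ℂ)) := by
    have hb : Integrable (fun x : ℝ =>
        Set.indicator (Set.Icc (-1 : ℝ) 1) (fun _ => 2 * C) x + (‖f x‖ + ‖f (-x)‖)) := by
      apply Integrable.add
      · exact (integrable_indicator_iff measurableSet_Icc).mpr
          ((integrableOn_const_iff).mpr (Or.inr measure_Icc_lt_top))
      · exact hfi.norm.add hfin.norm
    refine Integrable.mono' hb (hhmeas.aestronglyMeasurable) ?_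
    filter_upwards with x
    rcases le_or_gt |x| 1 with hx1 | hx1
    · have : Set.indicator (Set.Icc (-1 : ℝ) 1) (fun _ => 2 * C) x = 2 * C := by
        apply Set.indicator_of_mem
        constructor <;> [linarith [neg_abs_le x]; linarith [le_abs_self x]]
      rw [this]
      have := hhx2 x
      have h1 : (0:ℝ) ≤ ‖f x‖ + ‖f (-x)‖ := by positivity
      linarith
    · have hx0 : x ≠ 0 := by intro hx; rw [hx, abs_zero] at hx1; linarith
      have hind : (0:ℝ) ≤ Set.indicator (Set.Icc (-1 : ℝ) 1) (fun _ => 2 * C) x := by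
        apply Set.indicator_nonneg; intro _ _; positivity
      have : ‖h x / (x : ℂ)‖ ≤ ‖h x‖ := by
        rw [hhx x hx0]
        exact div_le_self (norm_nonneg _) hx1.le
      have h2 : ‖h x‖ ≤ ‖f x‖ + ‖f (-x)‖ := norm_sub_le _ _
      linarith
  -- a.e. nonzero
  have h0ae : ∀ᵐ x : ℝ, x ≠ 0 := by
    rw [ae_iff]
    simpa using Real.volume_singleton (a := 0)
  -- truncation sets
  set S : ℝ → Set ℝ := fun δ => {x : ℝ | δ ≤ |x|} with hS_def
  have hSm : ∀ δ : ℝ, MeasurableSet (S δ) :=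
    fun δ => measurableSet_le measurable_const continuous_abs.measurable
  have hIS : ∀ δ : ℝ, 0 < δ → ∀ g : ℝ → ℂ, Continuous g → Integrable g →
      IntegrableOn (fun x : ℝ => g x / (x : ℂ)) (S δ) := by
    intro δ hδ g hgc hgi
    refine Integrable.mono' ((hgi.norm.const_mul δ⁻¹).restrict)
      ((hgc.measurable.div Complex.measurable_ofReal).aestronglyMeasurable) ?_
    rw [ae_restrict_iff' (hSm δ)]
    filter_upwards with x hx
    have hx' : δ ≤ |x| := hx
    have hx0 : x ≠ 0 := by
      rintro rfl; rw [abs_zero] at hx'; linarith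
    rw [norm_div, Complex.norm_real, Real.norm_eq_abs, inv_mul_eq_div]
    gcongr
  have key : ∀ δ : ℝ, 0 < δ →
      ∫ x in S δ, f x / (x : ℂ) = (2⁻¹ : ℝ) • ∫ x in S δ, h x / (x : ℂ) := by
    intro δ hδ
    have hIf := hIS δ hδ (fun x => f x) f.continuous hfi
    have hIfn := hIS δ hδ (fun x => f (-x)) (f.continuous.comp continuous_neg) hfin
    have h1 : ∫ x in S δ, f x / (x : ℂ) = ∫ x in S δ, f (-x) / ((-x : ℝ) : ℂ) := by
      have hneg := integral_neg_eq_self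
        (fun x : ℝ => Set.indicator (S δ) (fun y : ℝ => f y / (y : ℂ)) x) volume
      rw [← integral_indicator (hSm δ), ← integral_indicator (hSm δ), ← hneg]
      congr 1; funext x
      by_cases hx : x ∈ S δ
      · have hx' : -x ∈ S δ := by simpa [hS_def, abs_neg] using hx
        rw [Set.indicator_of_mem hx', Set.indicator_of_mem hx]
      · have hx' : -x ∉ S δ := by simpa [hS_def, abs_neg] using hx
        rw [Set.indicator_of_notMem hx', Set.indicator_of_notMem hx]
    have h2 : ∫ x in S δ, f (-x) / ((-x : ℝ) : ℂ) = -∫ x in S δ, f (-x) / (x : ℂ) := by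
      rw [← integral_neg]
      congr 1; funext x
      push_cast
      rw [div_neg]
    have h3 : ∫ x in S δ, h x / (x : ℂ)
        = (∫ x in S δ, f x / (x : ℂ)) - ∫ x in S δ, f (-x) / (x : ℂ) := by
      rw [← integral_sub hIf hIfn]
      congr 1; funext x
      rw [hh_def]
      exact sub_div _ _ _
    have hb : ∫ x in S δ, f (-x) / (x : ℂ) = -∫ x in S δ, f x / (x : ℂ) := by
      rw [h1, h2, neg_neg]
    rw [h3, hb, Complex.real_smul]
    push_cast
    ring
  have hA2 : Tendsto (fun δ : ℝ => ∫ x in S δ, h x / (x : ℂ)) (𝓝[>] 0)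
      (𝓝 (∫ x : ℝ, h x / (x : ℂ))) := by
    have heq : ∀ δ : ℝ, ∫ x in S δ, h x / (x : ℂ)
        = ∫ x : ℝ, Set.indicator (S δ) (fun y : ℝ => h y / (y : ℂ)) x :=
      fun δ => (integral_indicator (hSm δ)).symm
    simp_rw [heq]
    apply tendsto_integral_filter_of_dominated_convergence (fun x : ℝ => ‖h x / (x : ℂ)‖)
    · filter_upwards with δ
      exact (hhmeas.indicator (hSm δ)).aestronglyMeasurable
    · filter_upwards with δ
      filter_upwards with x
      exact norm_indicator_le_norm_self _ _
    · exact hint.norm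
    · filter_upwards [h0ae] with x hx
      refine Tendsto.congr' ?_ tendsto_const_nhds
      filter_upwards [Ioo_mem_nhdsGT_of_mem (Set.mem_Ico.mpr ⟨le_refl 0, abs_pos.mpr hx⟩)]
        with δ hδ
      exact (Set.indicator_of_mem (show x ∈ S δ from hδ.2.le)
        (fun y : ℝ => h y / (y : ℂ))).symm
  -- kernel bounds
  have hker1 : ∀ ε : ℝ, 0 < ε → ∀ x : ℝ, |x / (x^2 + ε^2)| ≤ (2*ε)⁻¹ := by
    intro ε hε x
    rw [abs_div, abs_of_pos (by positivity : (0:ℝ) < x^2+ε^2),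
      div_le_iff₀ (by positivity), inv_mul_eq_div, le_div_iff₀ (by positivity)]
    nlinarith [sq_nonneg (|x| - ε), _root_.sq_abs x, abs_nonneg x]
  have hker2 : ∀ ε : ℝ, 0 < ε → ∀ x : ℝ, |ε / (x^2 + ε^2)| ≤ ε⁻¹ := by
    intro ε hε x
    rw [abs_div, abs_of_pos hε, abs_of_pos (by positivity : (0:ℝ) < x^2+ε^2)]
    calc ε / (x^2+ε^2) ≤ ε / (ε*ε) := by
          gcongr <;> nlinarith [sq_nonneg x]
      _ = ε⁻¹ := by field_simp
  have hsmulint : ∀ (k : ℝ → ℝ) (M : ℝ) (g : ℝ → ℂ), Continuous k → Continuous g →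
      Integrable g → (∀ x, |k x| ≤ M) → Integrable (fun x : ℝ => k x • g x) := by
    intro k M g hk hg hgi hkM
    refine Integrable.mono' (hgi.norm.const_mul M) (hk.smul hg).aestronglyMeasurable ?_
    filter_upwards with x
    rw [norm_smul, Real.norm_eq_abs]
    gcongr
    exact hkM x
  set P : ℝ → ℂ := fun ε => ∫ x : ℝ, (x / (x^2 + ε^2)) • f x with hP_def
  set Q : ℝ → ℂ := fun ε => ∫ x : ℝ, (ε / (x^2 + ε^2)) • f x with hQ_def
  -- sup norm bound
  obtain ⟨C0, hC0pos, hC0⟩ := f.decay 0 0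
  have hC0' : ∀ x : ℝ, ‖f x‖ ≤ C0 := fun x => by
    simpa [norm_iteratedFDeriv_zero] using hC0 x
  -- Poisson kernel limit
  have hQeq : ∀ ε : ℝ, 0 < ε → Q ε = ∫ t : ℝ, ((1 + t^2)⁻¹ : ℝ) • f (ε*t) := by
    intro ε hε
    have hsub := MeasureTheory.Measure.integral_comp_mul_left
      (fun x : ℝ => (ε / (x^2 + ε^2)) • f x) ε
    have h2 : ∀ t : ℝ, (ε / ((ε*t)^2 + ε^2)) • f (ε*t)
        = ε⁻¹ • (((1+t^2)⁻¹ : ℝ) • f (ε*t)) := by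
      intro t
      rw [smul_smul]
      congr 1
      field_simp
      ring
    simp_rw [h2] at hsub
    rw [integral_smul, abs_of_pos (inv_pos.mpr hε)] at hsub
    exact (smul_right_injective ℂ (inv_ne_zero hε.ne') hsub).symm
  have hQlim : Tendsto Q (𝓝[>] 0) (𝓝 ((Real.pi : ℝ) • (f 0 : ℂ))) := by
    have hlim2 : Tendsto (fun ε : ℝ => ∫ t : ℝ, ((1 + t^2)⁻¹ : ℝ) • f (ε*t)) (𝓝[>] 0)
        (𝓝 (∫ t : ℝ, ((1 + t^2)⁻¹ : ℝ) • f 0)) := by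
      apply tendsto_integral_filter_of_dominated_convergence (fun t : ℝ => C0 * (1 + t^2)⁻¹)
      · filter_upwards with ε
        exact (((continuous_const.add (continuous_pow 2)).inv₀ (fun t => (by positivity : (1:ℝ) + t^2 ≠ 0))).smul
          (f.continuous.comp (continuous_const.mul continuous_id))).aestronglyMeasurable
      · filter_upwards with ε
        filter_upwards with t
        rw [norm_smul, Real.norm_eq_abs, abs_of_pos (by positivity : (0:ℝ) < (1+t^2)⁻¹),
          mul_comm ((1+t^2)⁻¹ : ℝ) ‖f (ε*t)‖]
        gcongr
        exact hC0' _
      · exact integrable_inv_one_add_sq.const_mul C0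
      · filter_upwards with t
        apply Tendsto.const_smul
        have hmt : Tendsto (fun ε : ℝ => ε * t) (𝓝[>] 0) (𝓝 0) := by
          have := ((continuous_id.mul (continuous_const (y := t))).tendsto 0).mono_left
            (nhdsWithin_le_nhds (s := Set.Ioi (0:ℝ)))
          convert this using 2 <;> simp
        exact (f.continuous.tendsto 0).comp hmt
    rw [integral_smul_const, integral_univ_inv_one_add_sq] at hlim2
    refine Tendsto.congr' ?_ hlim2
    filter_upwards [self_mem_nhdsWithin] with ε hε
    exact (hQeq ε hε).symm
  -- principal part limit
  have hPeq : ∀ ε : ℝ, 0 < ε → P ε = (2⁻¹ : ℝ) • ∫ x : ℝ, (x/(x^2+ε^2)) • h x := by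
    intro ε hε
    have hk : Continuous (fun x : ℝ => x / (x^2+ε^2)) :=
      continuous_id.div (by fun_prop) (fun x => by positivity)
    have hI1 : Integrable (fun x : ℝ => (x/(x^2+ε^2)) • f x) :=
      hsmulint _ (2*ε)⁻¹ _ hk f.continuous hfi (hker1 ε hε)
    have hI2 : Integrable (fun x : ℝ => (x/(x^2+ε^2)) • f (-x)) :=
      hsmulint _ (2*ε)⁻¹ _ hk (f.continuous.comp continuous_neg) hfin (hker1 ε hε)
    have hneg : ∫ x : ℝ, (x/(x^2+ε^2)) • f (-x) = -∫ x : ℝ, (x/(x^2+ε^2)) • f x := by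
      have hni := integral_neg_eq_self (fun x : ℝ => (x/(x^2+ε^2)) • f x) volume
      simp only [neg_sq, neg_div, neg_smul] at hni
      rw [integral_neg] at hni
      exact neg_eq_iff_eq_neg.mp hni
    have hsplit : ∫ x : ℝ, (x/(x^2+ε^2)) • h x
        = (∫ x : ℝ, (x/(x^2+ε^2)) • f x) - ∫ x : ℝ, (x/(x^2+ε^2)) • f (-x) := by
      rw [← integral_sub hI1 hI2]
      congr 1; funext x; rw [hh_def]; exact smul_sub _ _ _
    rw [hsplit, hneg, Complex.real_smul]
    push_cast
    ring
  have hPlim : Tendsto P (𝓝[>] 0) (𝓝 ((2⁻¹ : ℝ) • ∫ x : ℝ, h x / (x:ℂ))) := by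
    have hmain : Tendsto (fun ε : ℝ => ∫ x : ℝ, (x/(x^2+ε^2)) • h x) (𝓝[>] 0)
        (𝓝 (∫ x : ℝ, h x / (x:ℂ))) := by
      apply tendsto_integral_filter_of_dominated_convergence (fun x : ℝ => ‖h x / (x:ℂ)‖)
      · filter_upwards [self_mem_nhdsWithin] with ε hε
        have hε' : (0:ℝ) < ε := hε
        exact ((continuous_id.div (by fun_prop) (fun x => by positivity)).smul
          (f.continuous.sub (f.continuous.comp continuous_neg))).aestronglyMeasurable
      · filter_upwards [self_mem_nhdsWithin] with ε hε
        filter_upwards [h0ae] with x hx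
        have hε' : (0:ℝ) < ε := hε
        rw [norm_smul, Real.norm_eq_abs, hhx x hx, abs_div,
          abs_of_pos (by positivity : (0:ℝ) < x^2+ε^2), div_mul_eq_mul_div,
          div_le_div_iff₀ (by positivity) (abs_pos.mpr hx)]
        nlinarith [_root_.sq_abs x, norm_nonneg (h x), sq_nonneg ε, abs_nonneg x]
      · exact hint.norm
      · filter_upwards [h0ae] with x hx
        have hc : ContinuousAt (fun ε : ℝ => x/(x^2+ε^2)) 0 := by
          apply ContinuousAt.div continuousAt_const (by fun_prop)
          simpa using pow_ne_zero 2 hx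
        have hval : (x/(x^2+0^2) : ℝ) • h x = h x / (x:ℂ) := by
          have h9 : (x/(x^2+0^2) : ℝ) = x⁻¹ := by
            rw [show (x:ℝ)^2+0^2 = x*x from by ring, div_mul_cancel_left₀ hx]
          rw [h9, Complex.real_smul]
          push_cast
          rw [inv_mul_eq_div]
        rw [← hval]
        exact ((hc.tendsto.smul_const (h x)).mono_left nhdsWithin_le_nhds)
    refine Tendsto.congr' ?_ (hmain.const_smul (2⁻¹:ℝ))
    filter_upwards [self_mem_nhdsWithin] with ε hε
    exact (hPeq ε hε).symm
  -- decomposition of the shifted integrals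
  have hdecomp : ∀ (σ : ℝ) (_ : σ = 1 ∨ σ = -1) (ε : ℝ), 0 < ε →
      ∫ x : ℝ, f x / ((x:ℂ) + σ * ε * Complex.I) = P ε - σ • (Complex.I * Q ε) := by
    intro σ hσ ε hε
    have hσ2 : σ^2 = 1 := by rcases hσ with rfl | rfl <;> norm_num
    have hσ0 : σ ≠ 0 := by rcases hσ with rfl | rfl <;> norm_num
    have hkc1 : Continuous (fun x : ℝ => x/(x^2+ε^2)) :=
      continuous_id.div (by fun_prop) (fun x => by positivity)
    have hkc2 : Continuous (fun x : ℝ => ε/(x^2+ε^2)) :=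
      continuous_const.div (by fun_prop) (fun x => by positivity)
    have hI1 : Integrable (fun x : ℝ => (x/(x^2+ε^2)) • f x) :=
      hsmulint _ (2*ε)⁻¹ _ hkc1 f.continuous hfi (hker1 ε hε)
    have hI2 : Integrable (fun x : ℝ => (ε/(x^2+ε^2)) • (σ • (Complex.I * f x))) :=
      hsmulint _ ε⁻¹ _ hkc2 (by fun_prop) ((hfi.const_mul Complex.I).smul σ) (hker2 ε hε)
    have hpt : ∀ x : ℝ, f x / ((x:ℂ) + σ * ε * Complex.I)
        = (x/(x^2+ε^2)) • f x - (ε/(x^2+ε^2)) • (σ • (Complex.I * f x)) := by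
      intro x
      have hden : (x:ℂ) + σ * ε * Complex.I ≠ 0 := by
        intro hcon
        have him := congrArg Complex.im hcon
        simp at him
        rcases him with h' | h'
        · exact hσ0 h'
        · exact hε.ne' h'
      have hd2 : ((x:ℝ)^2 + ε^2 : ℝ) ≠ 0 := by positivity
      rw [Complex.real_smul, Complex.real_smul, Complex.real_smul]
      push_cast
      rw [div_eq_iff hden]
      have hI2' : (Complex.I)^2 = -1 := Complex.I_sq
      have hs2 : (σ:ℂ)^2 = 1 := by exact_mod_cast hσ2
      have hd2c : ((x:ℂ)^2 + (ε:ℂ)^2) ≠ 0 := by exact_mod_cast hd2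
      field_simp
      ring_nf
      rw [hI2', hs2]
      field_simp [hd2c]
      ring
    calc ∫ x : ℝ, f x / ((x:ℂ) + σ * ε * Complex.I)
        = ∫ x : ℝ, ((x/(x^2+ε^2)) • f x - (ε/(x^2+ε^2)) • (σ • (Complex.I * f x))) := by
          congr 1; funext x; exact hpt x
      _ = P ε - ∫ x : ℝ, (ε/(x^2+ε^2)) • (σ • (Complex.I * f x)) := integral_sub hI1 hI2
      _ = P ε - σ • (Complex.I * Q ε) := by
          congr 1
          rw [show (fun x : ℝ => (ε/(x^2+ε^2)) • (σ • (Complex.I * f x)))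
              = fun x : ℝ => (σ * Complex.I) * ((ε/(x^2+ε^2)) • f x) from funext fun x => by
            rw [Complex.real_smul, Complex.real_smul, Complex.real_smul]; ring,
            integral_const_mul, Complex.real_smul]
          ring
  -- the principal value
  refine ⟨(2⁻¹ : ℝ) • ∫ x : ℝ, h x / (x : ℂ), ?_, ?_, ?_⟩
  · refine Tendsto.congr' ?_ (hA2.const_smul (2⁻¹ : ℝ))
    filter_upwards [self_mem_nhdsWithin] with δ hδ
    exact (key δ hδ).symm
  · have hcomb := hPlim.sub ((hQlim.const_mul Complex.I).const_smul (1:ℝ))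
    have hlim_eq : (2⁻¹:ℝ) • (∫ x : ℝ, h x / (x:ℂ)) - (1:ℝ) • (Complex.I * ((Real.pi:ℝ) • (f 0:ℂ)))
        = -Complex.I * Real.pi * f 0 + (2⁻¹:ℝ) • ∫ x : ℝ, h x / (x:ℂ) := by
      simp only [Complex.real_smul]
      push_cast
      ring
    rw [hlim_eq] at hcomb
    refine Tendsto.congr' ?_ hcomb
    filter_upwards [self_mem_nhdsWithin] with ε hε
    have hd := hdecomp 1 (Or.inl rfl) ε hε
    simp only [Complex.ofReal_one, one_mul, one_smul] at hd ⊢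
    exact hd.symm
  · have hcomb := hPlim.sub ((hQlim.const_mul Complex.I).const_smul (-1:ℝ))
    have hlim_eq : (2⁻¹:ℝ) • (∫ x : ℝ, h x / (x:ℂ)) - (-1:ℝ) • (Complex.I * ((Real.pi:ℝ) • (f 0:ℂ)))
        = Complex.I * Real.pi * f 0 + (2⁻¹:ℝ) • ∫ x : ℝ, h x / (x:ℂ) := by
      simp only [Complex.real_smul]
      push_cast
      ring
    rw [hlim_eq] at hcomb
    refine Tendsto.congr' ?_ hcomb
    filter_upwards [self_mem_nhdsWithin] with ε hε
    have hd := hdecomp (-1) (Or.inr rfl) ε hε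
    simp only [Complex.ofReal_neg, Complex.ofReal_one, neg_one_mul, neg_mul, neg_smul, one_smul, one_mul,
      ← sub_eq_add_neg, sub_neg_eq_add] at hd ⊢
    exact hd.symm
end
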